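/- Let m ≥ 1 and r > 0. Then for every f ∈ L²(ℝ^m): ∫_{ℝ^m} |Λ_r f(x) − f(x)|² dx ≤ ((m+2)/(2 ν_m r^m)) ∬_{|x−y|<r} |f(x) − f(y)|² dx dy. -/

import Mathlib

open MeasureTheory

/-- The Lebesgue volume of the unit ball in `ℝ^m`. -/
noncomputable def unitBallVol (m : ℕ) : ℝ :=
  (volume (Metric.ball (0 : EuclideanSpace ℝ (Fin m)) 1)).toReal

/-- The profile `ψ(t) = ((m+2)/(2ν_m))(1 − t²)` for `0 ≤ t ≤ 1`, and `0` for `t > 1`. -/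
noncomputable def smoothPsi (m : ℕ) (t : ℝ) : ℝ :=
  if t ≤ 1 then (((m : ℝ) + 2) / (2 * unitBallVol m)) * (1 - t ^ 2) else 0

/-- The smoothing kernel `k_r(x,y) = r^{−m} ψ(|x−y|/r)`. -/
noncomputable def smoothKernel (m : ℕ) (r : ℝ) (x y : EuclideanSpace ℝ (Fin m)) : ℝ :=
  (r ^ m)⁻¹ * smoothPsi m (dist x y / r)

/-- The smoothing operator `Λ_r f(x) = ∫ k_r(x,y) f(y) dy`. -/
noncomputable def smoothOp (m : ℕ) (r : ℝ) (f : EuclideanSpace ℝ (Fin m) → ℝ)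
    (x : EuclideanSpace ℝ (Fin m)) : ℝ :=
  ∫ y, smoothKernel m r x y * f y

/-!
Polar coordinates and `∫₀¹ t^(m-1) (1 - t²) dt = 2 / (m (m+2))` show that `k_r(x, ·)` is a
probability density supported in `B(x, r)`. Hence `Λ_r f(x) - f(x) = ∫ k_r(x,y) (f y - f x) dy`,
whose square is at most `∫ k_r(x,y) (f y - f x)² dy` (the variance of `f - f x` under this
density is nonnegative), and `k_r ≤ (m+2)/(2 ν_m r^m)`. Integrating in `x` gives the bound; the
right-hand side is integrable by Fubini, as `(a - b)² ≤ 2a² + 2b²` and balls have equal volume.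
-/

open Metric Set

lemma sq_integral_mul_le_integral_mul_sq {α : Type*} [MeasurableSpace α] {μ : Measure α}
    {w g : α → ℝ} (hw : ∀ a, 0 ≤ w a) (hw_one : ∫ a, w a ∂μ = 1)
    (hwg : Integrable (fun a => w a * g a) μ) (hwg2 : Integrable (fun a => w a * g a ^ 2) μ) :
    (∫ a, w a * g a ∂μ) ^ 2 ≤ ∫ a, w a * g a ^ 2 ∂μ := by
  set c := ∫ a, w a * g a ∂μ
  have hw_int : Integrable w μ := .of_integral_ne_zero (by simp [hw_one])
  have h : 0 ≤ ∫ a, w a * (g a - c) ^ 2 ∂μ :=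
    integral_nonneg fun a => mul_nonneg (hw a) (sq_nonneg _)
  have hexp : (fun a => w a * (g a - c) ^ 2)
      = fun a => w a * g a ^ 2 - (2 * c) * (w a * g a) + c ^ 2 * w a := by
    ext a; ring
  rw [hexp, integral_add ?_ (hw_int.const_mul _), integral_sub hwg2 (hwg.const_mul _),
    integral_const_mul, integral_const_mul, hw_one] at h
  · linarith
  · exact hwg2.sub (hwg.const_mul _)

section LocalEnergy

variable {E : Type*} [NormedAddCommGroup E] [NormedSpace ℝ E] [MeasurableSpace E] [BorelSpace E]
  [FiniteDimensional ℝ E] {μ : Measure E} [μ.IsAddHaarMeasure] {f : E → ℝ} {r : ℝ}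

lemma integrable_indicator_dist_lt_mul_fst (hf : Integrable f μ) (r : ℝ) :
    Integrable ({p : E × E | dist p.2 p.1 < r}.indicator fun p => f p.1) (μ.prod μ) := by
  have hS : MeasurableSet {p : E × E | dist p.2 p.1 < r} :=
    measurableSet_lt (by fun_prop) measurable_const
  refine (integrable_prod_iff ((hf.1.comp_fst).indicator hS)).2 ⟨.of_forall fun x => ?_, ?_⟩
  · change Integrable ((ball x r).indicator fun _ => f x) μ
    exact (integrable_indicator_iff measurableSet_ball).2
      (integrableOn_const measure_ball_lt_top.ne)
  · have hsec : ∀ x,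
        ∫ y, ‖{p : E × E | dist p.2 p.1 < r}.indicator (fun p => f p.1) (x, y)‖ ∂μ
          = μ.real (ball 0 r) * ‖f x‖ := fun x => by
      change ∫ y, ‖(ball x r).indicator (fun _ => f x) y‖ ∂μ = _
      simp_rw [norm_indicator_eq_indicator_norm]
      rw [integral_indicator_const _ measurableSet_ball, smul_eq_mul, measureReal_def,
        measureReal_def, Measure.addHaar_ball_center]
    simp_rw [hsec]
    exact hf.norm.const_mul _

lemma integrable_integral_ball_sq_sub (hf : MemLp f 2 μ) (r : ℝ) :
    Integrable (fun x => ∫ y in ball x r, (f x - f y) ^ 2 ∂μ) μ := by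
  set S := {p : E × E | dist p.2 p.1 < r}
  have hS : MeasurableSet S := measurableSet_lt (by fun_prop) measurable_const
  have hfst : Integrable (S.indicator fun p => f p.1 ^ 2) (μ.prod μ) :=
    integrable_indicator_dist_lt_mul_fst hf.integrable_sq r
  have hsnd : Integrable (S.indicator fun p => f p.2 ^ 2) (μ.prod μ) := by
    convert hfst.swap using 1
    ext p
    simp only [S, Function.comp, indicator_apply, mem_ofPred_eq, Prod.fst_swap, Prod.snd_swap,
      dist_comm]
  have hF : Integrable (S.indicator fun p => (f p.1 - f p.2) ^ 2) (μ.prod μ) := by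
    refine ((hfst.const_mul 2).add (hsnd.const_mul 2)).mono'
      (((hf.1.comp_fst.sub hf.1.comp_snd).pow 2).indicator hS) (.of_forall fun p => ?_)
    by_cases hp : p ∈ S
    · simp only [indicator_of_mem hp, Pi.add_apply, norm_pow, Real.norm_eq_abs, sq_abs]
      nlinarith [sq_nonneg (f p.1 + f p.2)]
    · simp [indicator_of_notMem hp]
  refine hF.integral_prod_left.congr (.of_forall fun x => ?_)
  exact integral_indicator (f := fun y => (f x - f y) ^ 2) measurableSet_ball

end LocalEnergy

section SmoothingKernel

variable {m : ℕ} {r : ℝ}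

local notation "E" => EuclideanSpace ℝ (Fin m)

lemma unitBallVol_pos (hm : 1 ≤ m) : 0 < unitBallVol m := by
  have := Fin.pos_iff_nonempty.mp hm
  exact ENNReal.toReal_pos (measure_ball_pos volume 0 one_pos).ne' measure_ball_lt_top.ne

lemma smoothPsi_of_le_one {t : ℝ} (ht : t ≤ 1) :
    smoothPsi m t = ((m : ℝ) + 2) / (2 * unitBallVol m) * (1 - t ^ 2) := if_pos ht

lemma smoothPsi_eq_zero {t : ℝ} (ht : 1 ≤ t) : smoothPsi m t = 0 := by
  rcases ht.eq_or_lt with rfl | ht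
  · simp [smoothPsi]
  · exact if_neg ht.not_ge

lemma smoothPsi_nonneg {t : ℝ} (ht : 0 ≤ t) : 0 ≤ smoothPsi m t := by
  unfold smoothPsi
  split_ifs with h
  · have : 0 ≤ unitBallVol m := ENNReal.toReal_nonneg
    exact mul_nonneg (by positivity) (by nlinarith)
  · rfl

lemma smoothPsi_le (t : ℝ) :
    smoothPsi m t ≤ ((m : ℝ) + 2) / (2 * unitBallVol m) := by
  have : 0 ≤ unitBallVol m := ENNReal.toReal_nonneg
  unfold smoothPsi
  split_ifs
  · exact mul_le_of_le_one_right (by positivity) (by nlinarith)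
  · positivity

@[fun_prop]
lemma measurable_smoothPsi : Measurable (smoothPsi m) :=
  Measurable.ite measurableSet_Iic (by fun_prop) measurable_const

lemma integral_Ioi_pow_smul_smoothPsi (hm : 1 ≤ m) :
    ∫ t in Ioi (0 : ℝ), t ^ (m - 1) • smoothPsi m t = (m * unitBallVol m)⁻¹ := by
  have hν := unitBallVol_pos hm
  have hm' : (m : ℝ) ≠ 0 := by positivity
  rw [setIntegral_eq_of_subset_of_forall_sdiff_eq_zero measurableSet_Ioi Ioc_subset_Ioi_self
      fun t ht => by simp [smoothPsi_eq_zero (not_le.mp fun h => ht.2 ⟨ht.1, h⟩).le],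
    ← intervalIntegral.integral_of_le zero_le_one]
  have hpow : ∀ t : ℝ, t ^ (m - 1) * t ^ 2 = t ^ (m + 1) := fun t => by
    rw [← pow_add]; congr 1; omega
  calc ∫ t in (0 : ℝ)..1, t ^ (m - 1) • smoothPsi m t
      = ∫ t in (0 : ℝ)..1,
          ((m : ℝ) + 2) / (2 * unitBallVol m) * (t ^ (m - 1) - t ^ (m + 1)) := by
        refine intervalIntegral.integral_congr fun t ht => ?_
        rw [uIcc_of_le zero_le_one] at ht
        simp only [smul_eq_mul, smoothPsi_of_le_one ht.2, ← hpow]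
        ring
    _ = (m * unitBallVol m)⁻¹ := by
        rw [intervalIntegral.integral_const_mul, intervalIntegral.integral_sub
          (intervalIntegral.intervalIntegrable_pow _) (intervalIntegral.intervalIntegrable_pow _),
          integral_pow, integral_pow, Nat.sub_add_cancel hm, zero_pow (by omega),
          zero_pow (by omega)]
        push_cast [Nat.cast_sub hm]
        rw [sub_add_cancel, one_pow, one_pow, sub_zero]
        field_simp
        ring

lemma integral_smoothPsi_norm (hm : 1 ≤ m) : ∫ z : E, smoothPsi m ‖z‖ = 1 := by
  have hν := unitBallVol_pos hm
  have := Fin.pos_iff_nonempty.mp hm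
  rw [integral_fun_norm_addHaar, finrank_euclideanSpace_fin, integral_Ioi_pow_smul_smoothPsi hm,
    nsmul_eq_mul, smul_eq_mul]
  change (m : ℝ) * (unitBallVol m * _) = 1
  field_simp

lemma smoothKernel_eq (hr : 0 < r) (x y : E) :
    smoothKernel m r x y = (r ^ m)⁻¹ * smoothPsi m ‖r⁻¹ • (y - x)‖ := by
  rw [smoothKernel, norm_smul, norm_inv, Real.norm_of_nonneg hr.le, dist_comm, dist_eq_norm,
    inv_mul_eq_div r]

lemma integral_smoothKernel (hm : 1 ≤ m) (hr : 0 < r) (x : E) :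
    ∫ y, smoothKernel m r x y = 1 := by
  simp_rw [smoothKernel_eq hr, integral_const_mul]
  rw [integral_sub_right_eq_self (fun z : E => smoothPsi m ‖r⁻¹ • z‖),
    Measure.integral_comp_inv_smul_of_nonneg _ (fun z : E => smoothPsi m ‖z‖) hr.le,
    integral_smoothPsi_norm hm, finrank_euclideanSpace_fin, smul_eq_mul, mul_one]
  field_simp

lemma smoothKernel_nonneg (hr : 0 < r) (x y : E) : 0 ≤ smoothKernel m r x y :=
  mul_nonneg (by positivity) (smoothPsi_nonneg (by positivity))

lemma smoothKernel_le (hr : 0 < r) (x y : E) :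
    smoothKernel m r x y ≤ (r ^ m)⁻¹ * (((m : ℝ) + 2) / (2 * unitBallVol m)) :=
  mul_le_mul_of_nonneg_left (smoothPsi_le _) (by positivity)

lemma smoothKernel_eq_zero_of_notMem_ball (hr : 0 < r) {x y : E} (hy : y ∉ ball x r) :
    smoothKernel m r x y = 0 := by
  rw [smoothKernel, smoothPsi_eq_zero ((one_le_div hr).mpr (by simpa [dist_comm] using hy)),
    mul_zero]

@[fun_prop]
lemma measurable_smoothKernel (x : E) : Measurable (smoothKernel m r x) := by
  unfold smoothKernel; fun_prop

lemma setIntegral_ball_smoothKernel_mul (hr : 0 < r) (x : E) (g : E → ℝ) :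
    ∫ y in ball x r, smoothKernel m r x y * g y = ∫ y, smoothKernel m r x y * g y :=
  setIntegral_eq_integral_of_forall_compl_eq_zero fun y hy => by
    rw [smoothKernel_eq_zero_of_notMem_ball hr hy, zero_mul]

lemma sq_smoothOp_sub_le (hm : 1 ≤ m) (hr : 0 < r) {f : E → ℝ} (x : E)
    (hf : MemLp f 2 (volume.restrict (ball x r))) :
    (smoothOp m r f x - f x) ^ 2
      ≤ (r ^ m)⁻¹ * (((m : ℝ) + 2) / (2 * unitBallVol m)) *
          ∫ y in ball x r, (f x - f y) ^ 2 := by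
  set C := (r ^ m)⁻¹ * (((m : ℝ) + 2) / (2 * unitBallVol m))
  set g := fun y => f y - f x
  have : IsFiniteMeasure (volume.restrict (ball x r)) :=
    isFiniteMeasure_restrict.mpr measure_ball_lt_top.ne
  have hg : MemLp g 2 (volume.restrict (ball x r)) := hf.sub (memLp_const _)
  have hk_bdd : ∀ y, ‖smoothKernel m r x y‖ ≤ C := fun y => by
    rw [Real.norm_of_nonneg (smoothKernel_nonneg hr x y)]; exact smoothKernel_le hr x y
  have hkg : Integrable (fun y => smoothKernel m r x y * g y) (volume.restrict (ball x r)) :=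
    (hg.integrable one_le_two).bdd_mul (by fun_prop) (.of_forall hk_bdd)
  have hkg2 : Integrable (fun y => smoothKernel m r x y * g y ^ 2) (volume.restrict (ball x r)) :=
    hg.integrable_sq.bdd_mul (by fun_prop) (.of_forall hk_bdd)
  have hk_one : ∫ y in ball x r, smoothKernel m r x y = 1 := by
    rw [← integral_smoothKernel hm hr x]
    simpa using setIntegral_ball_smoothKernel_mul hr x 1
  have hdiff : smoothOp m r f x - f x = ∫ y in ball x r, smoothKernel m r x y * g y := by
    have hkf : Integrable (fun y => smoothKernel m r x y * f y) (volume.restrict (ball x r)) :=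
      (hf.integrable one_le_two).bdd_mul (by fun_prop) (.of_forall hk_bdd)
    have hk : Integrable (smoothKernel m r x) (volume.restrict (ball x r)) :=
      .of_integral_ne_zero (by simp [hk_one])
    rw [smoothOp, ← setIntegral_ball_smoothKernel_mul hr, ← one_mul (f x), ← hk_one,
      ← integral_mul_const, ← integral_sub hkf (hk.mul_const _)]
    simp only [g, mul_sub]
  calc (smoothOp m r f x - f x) ^ 2
      ≤ ∫ y in ball x r, smoothKernel m r x y * g y ^ 2 :=
        hdiff ▸ sq_integral_mul_le_integral_mul_sq (smoothKernel_nonneg hr x) hk_one hkg hkg2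
    _ ≤ ∫ y in ball x r, C * g y ^ 2 :=
        integral_mono hkg2 (hg.integrable_sq.const_mul C)
          fun y => mul_le_mul_of_nonneg_right (smoothKernel_le hr x y) (sq_nonneg _)
    _ = C * ∫ y in ball x r, (f x - f y) ^ 2 := by
        rw [integral_const_mul]; simp only [g, sub_sq_comm]

end SmoothingKernel

theorem stmt_14 (m : ℕ) (hm : 1 ≤ m) (r : ℝ) (hr : 0 < r)
    (f : EuclideanSpace ℝ (Fin m) → ℝ) (hf : MemLp f 2 volume) :
    ∫ x, (smoothOp m r f x - f x) ^ 2
      ≤ (((m : ℝ) + 2) / (2 * unitBallVol m * r ^ m)) *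
          ∫ x, ∫ y in Metric.ball x r, (f x - f y) ^ 2 := by
  calc ∫ x, (smoothOp m r f x - f x) ^ 2
      ≤ ∫ x, (r ^ m)⁻¹ * (((m : ℝ) + 2) / (2 * unitBallVol m)) *
          ∫ y in ball x r, (f x - f y) ^ 2 :=
        integral_mono_of_nonneg (.of_forall fun _ => sq_nonneg _)
          ((integrable_integral_ball_sq_sub hf r).const_mul _)
          (.of_forall fun x => sq_smoothOp_sub_le hm hr x (hf.restrict _))
    _ = _ := by
        rw [integral_const_mul]
        ring
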